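/- (3/2-power decay ODE lemma) Let E > 0 and let y : [0,∞) → [0,∞) be continuously differentiable with y'(t) + E √(1+t) · y(t)^{3/2} ≤ 0 for all t ≥ 0. Then y(t) ≤ 36 y(0) / (6 + E √(y(0)) ((1+t)^{3/2} − 1))² for all t ≥ 0; in particular y(t) = O((1+t)^{−3}) as t → ∞. -/

import Mathlib

/-!
The barrier `z = (6 √y(0) / B)²`, with `B(t) = 6 + E √y(0) ((1+t)^{3/2} - 1)`, solves
`z' = -(E/2) √(1+t) z^{3/2}` and `z(0) = y(0)`. With only half the damping of the inequality
satisfied by `y`, it is a strict supersolution as soon as `y(0) > 0`, so `y` cannot cross it.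
If `y(0) = 0`, then `y` is nonincreasing and nonnegative, hence zero.
-/

open Real Set

theorem le_of_hasDerivAt_of_strict_supersolution {F : ℝ → ℝ → ℝ} {y y' z z' : ℝ → ℝ} {a b : ℝ}
    (hy : ∀ t ∈ Icc a b, HasDerivAt y (y' t) t) (hz : ∀ t ∈ Icc a b, HasDerivAt z (z' t) t)
    (hyF : ∀ t ∈ Ico a b, y' t ≤ F t (y t)) (hzF : ∀ t ∈ Ico a b, F t (z t) < z' t)
    (ha : y a ≤ z a) : ∀ t ∈ Icc a b, y t ≤ z t := fun _ ht =>
  image_le_of_deriv_right_lt_deriv_boundary'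
    (fun t ht => (hy t ht).continuousAt.continuousWithinAt)
    (fun t ht => (hy t (Ico_subset_Icc_self ht)).hasDerivWithinAt) ha
    (fun t ht => (hz t ht).continuousAt.continuousWithinAt)
    (fun t ht => (hz t (Ico_subset_Icc_self ht)).hasDerivWithinAt)
    (fun t ht hyz => (hyF t ht).trans_lt (hyz ▸ hzF t ht)) ht

theorem sq_rpow_three_halves {x : ℝ} (hx : 0 ≤ x) : (x ^ 2) ^ ((3 : ℝ) / 2) = x ^ 3 := by
  rw [← rpow_natCast x 2, ← rpow_mul hx]
  norm_num

theorem hasDerivAt_one_add_rpow_three_halves {t : ℝ} (ht : -1 < t) :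
    HasDerivAt (fun s : ℝ => (1 + s) ^ ((3 : ℝ) / 2)) (3 / 2 * √(1 + t)) t := by
  refine (((hasDerivAt_id' t).const_add 1).rpow_const (p := (3 : ℝ) / 2)
    (Or.inl (by linarith))).congr_deriv ?_
  rw [sqrt_eq_rpow]
  norm_num

noncomputable def decayDenom (E c t : ℝ) : ℝ := 6 + E * c * ((1 + t) ^ ((3 : ℝ) / 2) - 1)

noncomputable def decayBarrier (E c t : ℝ) : ℝ := (6 * c / decayDenom E c t) ^ 2

theorem six_le_decayDenom {E c t : ℝ} (hE : 0 ≤ E) (hc : 0 ≤ c) (ht : 0 ≤ t) :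
    6 ≤ decayDenom E c t := by
  have h : 1 ≤ (1 + t) ^ ((3 : ℝ) / 2) := one_le_rpow (by linarith) (by norm_num)
  have : 0 ≤ E * c * ((1 + t) ^ ((3 : ℝ) / 2) - 1) := by
    apply mul_nonneg (mul_nonneg hE hc); linarith
  unfold decayDenom; linarith

theorem hasDerivAt_decayDenom (E c : ℝ) {t : ℝ} (ht : -1 < t) :
    HasDerivAt (decayDenom E c) (E * c * (3 / 2 * √(1 + t))) t :=
  (((hasDerivAt_one_add_rpow_three_halves ht).sub_const 1).const_mul (E * c)).const_add 6

theorem decayBarrier_zero (E c : ℝ) : decayBarrier E c 0 = c ^ 2 := by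
  simp [decayBarrier, decayDenom]

theorem hasDerivAt_decayBarrier {E c t : ℝ} (hE : 0 ≤ E) (hc : 0 ≤ c) (ht : 0 ≤ t) :
    HasDerivAt (decayBarrier E c) (-(E / 2) * √(1 + t) * (6 * c / decayDenom E c t) ^ 3) t := by
  have hB : decayDenom E c t ≠ 0 := by linarith [six_le_decayDenom hE hc ht]
  refine (((hasDerivAt_const t (6 * c)).fun_div (hasDerivAt_decayDenom E c (by linarith))
    hB).fun_pow 2).congr_deriv ?_
  push_cast
  field_simp
  ring

theorem neg_mul_decayBarrier_rpow_lt {E c t : ℝ} (hE : 0 < E) (hc : 0 < c) (ht : 0 ≤ t) :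
    -(E * √(1 + t) * decayBarrier E c t ^ ((3 : ℝ) / 2)) <
      -(E / 2) * √(1 + t) * (6 * c / decayDenom E c t) ^ 3 := by
  have hB := six_le_decayDenom hE.le hc.le ht
  have hsqrt : 0 < √(1 + t) := sqrt_pos.mpr (by linarith)
  have hg : 0 < (6 * c / decayDenom E c t) ^ 3 := by positivity
  rw [decayBarrier, sq_rpow_three_halves (by positivity)]
  nlinarith [mul_pos (mul_pos hE hsqrt) hg]

theorem antitoneOn_of_three_halves_ineq {E : ℝ} {y y' : ℝ → ℝ} (hE : 0 ≤ E)
    (hnonneg : ∀ t : ℝ, 0 ≤ t → 0 ≤ y t)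
    (hderiv : ∀ t : ℝ, 0 ≤ t → HasDerivAt y (y' t) t)
    (hineq : ∀ t : ℝ, 0 ≤ t → y' t + E * √(1 + t) * y t ^ ((3 : ℝ) / 2) ≤ 0) :
    AntitoneOn y (Ici 0) := by
  refine antitoneOn_of_hasDerivWithinAt_nonpos (convex_Ici 0)
    (fun s hs => (hderiv s hs).continuousAt.continuousWithinAt)
    (fun s hs => (hderiv s (interior_subset hs)).hasDerivWithinAt) fun s hs => ?_
  have hs : 0 ≤ s := interior_subset hs
  have : 0 ≤ E * √(1 + s) * y s ^ ((3 : ℝ) / 2) := by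
    have := hnonneg s hs
    positivity
  linarith [hineq s hs]

theorem le_decayBarrier_of_three_halves_ineq {E : ℝ} {y y' : ℝ → ℝ} (hE : 0 < E)
    (hderiv : ∀ t : ℝ, 0 ≤ t → HasDerivAt y (y' t) t)
    (hineq : ∀ t : ℝ, 0 ≤ t → y' t + E * √(1 + t) * y t ^ ((3 : ℝ) / 2) ≤ 0)
    (hy0 : 0 < y 0) {t : ℝ} (ht : 0 ≤ t) : y t ≤ decayBarrier E √(y 0) t := by
  have hc : 0 < √(y 0) := sqrt_pos.mpr hy0
  refine le_of_hasDerivAt_of_strict_supersolution (a := 0) (b := t + 1)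
    (F := fun s u => -(E * √(1 + s) * u ^ ((3 : ℝ) / 2)))
    (fun s hs => hderiv s hs.1) (fun s hs => hasDerivAt_decayBarrier hE.le hc.le hs.1)
    (fun s hs => by linarith [hineq s hs.1])
    (fun s hs => neg_mul_decayBarrier_rpow_lt hE hc hs.1) ?_ t ⟨ht, by linarith⟩
  rw [decayBarrier_zero, sq_sqrt hy0.le]

theorem ode_three_halves_decay_general (E : ℝ) (hE : 0 < E) (y y' : ℝ → ℝ)
    (hnonneg : ∀ t : ℝ, 0 ≤ t → 0 ≤ y t)
    (hderiv : ∀ t : ℝ, 0 ≤ t → HasDerivAt y (y' t) t)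
    (hineq : ∀ t : ℝ, 0 ≤ t →
      y' t + E * Real.sqrt (1 + t) * y t ^ ((3 : ℝ) / 2) ≤ 0) :
    ∀ t : ℝ, 0 ≤ t →
      y t ≤ 36 * y 0 /
        (6 + E * Real.sqrt (y 0) * ((1 + t) ^ ((3 : ℝ) / 2) - 1)) ^ 2 := by
  intro t ht
  have hy0 : 0 ≤ y 0 := hnonneg 0 le_rfl
  rcases hy0.eq_or_lt with h0 | h0
  · have := antitoneOn_of_three_halves_ineq hE.le hnonneg hderiv hineq self_mem_Ici ht ht
    simpa [← h0] using this
  calc y t ≤ decayBarrier E √(y 0) t := le_decayBarrier_of_three_halves_ineq hE hderiv hineq h0 ht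
    _ = _ := by rw [decayBarrier, div_pow, mul_pow, sq_sqrt hy0]; norm_num [decayDenom]

/-- 3/2-power decay ODE lemma: `y' + E √(1+t) y^{3/2} ≤ 0` gives decay `(1+t)^{-3}`. -/
theorem ode_three_halves_decay (E : ℝ) (hE : 0 < E) (y y' : ℝ → ℝ)
    (hnonneg : ∀ t : ℝ, 0 ≤ t → 0 ≤ y t)
    (hderiv : ∀ t : ℝ, 0 ≤ t → HasDerivAt y (y' t) t)
    (hcont : ContinuousOn y' (Set.Ici (0 : ℝ)))
    (hineq : ∀ t : ℝ, 0 ≤ t →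
      y' t + E * Real.sqrt (1 + t) * y t ^ ((3 : ℝ) / 2) ≤ 0) :
    ∀ t : ℝ, 0 ≤ t →
      y t ≤ 36 * y 0 /
        (6 + E * Real.sqrt (y 0) * ((1 + t) ^ ((3 : ℝ) / 2) - 1)) ^ 2 :=
  ode_three_halves_decay_general E hE y y' hnonneg hderiv hineq
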